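/- Let γ > 0 be a real number. Then for every t ∈ [0, 1/2] one has 1 − (1 − t)^γ ≥ min{γ, 2(1 − 2^{-γ})} · t. -/
import Mathlib

/-- for `t ∈ [0, 1/2]`, `1 - (1-t)^γ ≥ min{γ, 2(1 - 2^(-γ))} t`. -/
theorem stmt_3 (γ : ℝ) (hγ : 0 < γ) (t : ℝ) (ht : t ∈ Set.Icc (0 : ℝ) (1 / 2)) :
    1 - (1 - t) ^ γ ≥ min γ (2 * (1 - (2 : ℝ) ^ (-γ))) * t := by
  obtain ⟨ht0, ht2⟩ := ht
  rcases le_or_gt γ 1 with hγ1 | hγ1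
  · -- Bernoulli: (1-t)^γ ≤ 1 - γ t
    have hb := rpow_one_add_le_one_add_mul_self (s := -t) (by linarith) hγ.le hγ1
    have hmin : min γ (2 * (1 - (2 : ℝ) ^ (-γ))) ≤ γ := min_le_left _ _
    have := mul_le_mul_of_nonneg_right hmin ht0
    rw [show (1:ℝ) + -t = 1 - t by ring] at hb
    nlinarith [hb]
  · -- chord: convexity of x ↦ x^γ on [0,∞)
    have hconv := convexOn_rpow hγ1.le
    have h1 : (1 : ℝ) ∈ Set.Ici (0 : ℝ) := by norm_num
    have h2 : (1/2 : ℝ) ∈ Set.Ici (0 : ℝ) := by norm_num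
    have hc := hconv.2 h1 h2 (show (0:ℝ) ≤ 1 - 2*t by linarith) (show (0:ℝ) ≤ 2*t by linarith) (show (1 - 2*t) + 2*t = 1 by ring)
    simp only [smul_eq_mul] at hc
    have harg : (1 - 2*t) * 1 + 2*t * (1/2) = 1 - t := by ring
    rw [harg, Real.one_rpow] at hc
    have hhalf : ((1:ℝ)/2) ^ γ = (2:ℝ) ^ (-γ) := by
      rw [Real.rpow_neg (by norm_num), ← Real.inv_rpow (by norm_num)]
      norm_num
    rw [hhalf] at hc
    have hmin : min γ (2 * (1 - (2 : ℝ) ^ (-γ))) ≤ 2 * (1 - (2 : ℝ) ^ (-γ)) := min_le_right _ _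
    have := mul_le_mul_of_nonneg_right hmin ht0
    nlinarith [hc]
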